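/- arXiv:2504.13516 — 6 statements merged into one kernel-verified Lean document; each statement's English description precedes it below -/
import Mathlib

section
/- Let f, g, κ, τ, ρ : I → ℝ with f, g differentiable, satisfying f'(s) = ρ(s)(1 - f(s)²), κ(s) f(s) = τ(s) g(s), and g'(s) = -ρ(s) f(s) g(s) on an open interval I. Assume κ(s) > 0, g(s) > 0, and 1 - f(s)² > 0 for all s ∈ I, and fix s₀ ∈ I. Then there is a constant c > 0 such that τ(s)/κ(s) = (1/c) · f(s)/√(1 - f(s)²) for all s ∈ I. -/
/-!
Along the curve, `g² / (1 - f²)` has derivative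
`(-2ρ f g² (1 - f²) + 2 f ρ (1 - f²) g²) / (1 - f²)² = 0`, so it is a positive constant `c²`
on the interval. Since `g > 0`, this gives `g = c √(1 - f²)`, and `κ f = τ g` turns into
`τ / κ = f / g = f / (c √(1 - f²))`.
-/

open Set

theorem IsOpen.is_const_of_hasDerivAt_zero {s : Set ℝ} {F : ℝ → ℝ} (hs : IsOpen s)
    (hs' : IsPreconnected s) (hF : ∀ x ∈ s, HasDerivAt F 0 x) {x y : ℝ} (hx : x ∈ s)
    (hy : y ∈ s) : F x = F y :=
  hs.is_const_of_deriv_eq_zero hs' (fun z hz ↦ (hF z hz).differentiableAt.differentiableWithinAt)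
    (fun z hz ↦ (hF z hz).deriv) hx hy

theorem hasDerivAt_sq_div_one_sub_sq_eq_zero {f g : ℝ → ℝ} {ρ s : ℝ}
    (hf : HasDerivAt f (ρ * (1 - f s ^ 2)) s) (hg : HasDerivAt g (-(ρ * f s * g s)) s)
    (hfs : 1 - f s ^ 2 ≠ 0) :
    HasDerivAt (fun t ↦ g t ^ 2 / (1 - f t ^ 2)) 0 s :=
  ((hg.fun_pow 2).fun_div ((hf.fun_pow 2).const_sub 1) hfs).congr_deriv (by ring)

theorem eq_sqrt_mul_sqrt_of_sq_div_eq {x d k : ℝ} (hx : 0 ≤ x) (hd : 0 < d)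
    (h : x ^ 2 / d = k) : x = √k * √d := by
  rw [← Real.sqrt_mul' _ hd.le, ← h, div_mul_cancel₀ _ hd.ne', Real.sqrt_sq hx]

/-- Theorem 4.2: for an anti-torqued slant helix with θ = π/2 the ratio of
curvatures satisfies `τ/κ = (1/c) f/√(1-f²)` for a constant `c > 0`. -/
theorem anti_torqued_slant_helix_ratio (a b : ℝ) (f g κ τ ρ : ℝ → ℝ)
    (hf : ∀ s ∈ Set.Ioo a b, HasDerivAt f (ρ s * (1 - f s ^ 2)) s)
    (hrel : ∀ s ∈ Set.Ioo a b, κ s * f s = τ s * g s)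
    (hg : ∀ s ∈ Set.Ioo a b, HasDerivAt g (-(ρ s * f s * g s)) s)
    (hκ : ∀ s ∈ Set.Ioo a b, 0 < κ s)
    (hgI : ∀ s ∈ Set.Ioo a b, 0 < g s)
    (hfI : ∀ s ∈ Set.Ioo a b, 0 < 1 - f s ^ 2)
    (s₀ : ℝ) (hs₀ : s₀ ∈ Set.Ioo a b) :
    ∃ c : ℝ, 0 < c ∧ ∀ s ∈ Set.Ioo a b,
      τ s / κ s = (1 / c) * (f s / Real.sqrt (1 - f s ^ 2)) := by
  set k := g s₀ ^ 2 / (1 - f s₀ ^ 2)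
  have hk : ∀ s ∈ Ioo a b, g s ^ 2 / (1 - f s ^ 2) = k := fun s hs ↦
    isOpen_Ioo.is_const_of_hasDerivAt_zero isPreconnected_Ioo
      (fun t ht ↦ hasDerivAt_sq_div_one_sub_sq_eq_zero (hf t ht) (hg t ht) (hfI t ht).ne')
      hs hs₀
  have hk_pos : 0 < k := div_pos (pow_pos (hgI s₀ hs₀) 2) (hfI s₀ hs₀)
  refine ⟨√k, Real.sqrt_pos.2 hk_pos, fun s hs ↦ ?_⟩
  have hgs : g s = √k * √(1 - f s ^ 2) :=
    eq_sqrt_mul_sqrt_of_sq_div_eq (hgI s hs).le (hfI s hs) (hk s hs)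
  have hratio : τ s / κ s = f s / g s := by
    rw [div_eq_div_iff (hκ s hs).ne' (hgI s hs).ne']
    linarith [hrel s hs]
  rw [hratio, hgs, div_mul_eq_div_div_swap, one_div_mul_eq_div]
end

section
/- If f, g : I → ℝ are differentiable with f'(s) = ρ(s)(1 - f(s)²) and g'(s) = -ρ(s) f(s) g(s) on an interval I, and 1 - f(s)² ≠ 0 on I, then the function s ↦ g(s)²/(1 - f(s)²) is constant on I. -/
/-- The quantity `g²/(1 - f²)` is conserved along solutions of
`f' = ρ(1 - f²)`, `g' = -ρ f g`. -/
theorem anti_torqued_conserved_quantity (a b : ℝ) (f g ρ : ℝ → ℝ)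
    (hf : ∀ s ∈ Set.Ioo a b, HasDerivAt f (ρ s * (1 - f s ^ 2)) s)
    (hg : ∀ s ∈ Set.Ioo a b, HasDerivAt g (-(ρ s * f s * g s)) s)
    (hfI : ∀ s ∈ Set.Ioo a b, 1 - f s ^ 2 ≠ 0) :
    ∀ s ∈ Set.Ioo a b, ∀ t ∈ Set.Ioo a b,
      g s ^ 2 / (1 - f s ^ 2) = g t ^ 2 / (1 - f t ^ 2) := by
  intro s hs t ht
  have key : ∀ x ∈ Set.Ioo a b,
      HasDerivAt (fun y => g y ^ 2 / (1 - f y ^ 2)) 0 x := by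
    intro x hx
    have h1 : HasDerivAt (fun y => g y ^ 2)
        (2 * g x * (-(ρ x * f x * g x))) x := by
      have := ((hg x hx).fun_pow 2)
      simpa [mul_comm, mul_assoc, mul_left_comm] using this
    have h2 : HasDerivAt (fun y => 1 - f y ^ 2)
        (-(2 * f x * (ρ x * (1 - f x ^ 2)))) x := by
      have := ((hf x hx).fun_pow 2).const_sub 1
      simpa [mul_comm, mul_assoc, mul_left_comm] using this
    have := h1.fun_div h2 (hfI x hx)
    refine this.congr_deriv ?_
    have hne := hfI x hx
    rw [div_eq_zero_iff]
    left
    ring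
  have hconv : Convex ℝ (Set.Ioo a b) := convex_Ioo a b
  have hbound : ∀ x ∈ Set.Ioo a b,
      ‖(0 : ℝ)‖ ≤ (0 : ℝ) := by simp
  have := hconv.norm_image_sub_le_of_norm_hasDerivWithin_le (C := 0)
    (fun x hx => (key x hx).hasDerivWithinAt)
    (fun x hx => by simp) hs ht
  have h0 : ‖g t ^ 2 / (1 - f t ^ 2) - g s ^ 2 / (1 - f s ^ 2)‖ ≤ 0 := by
    simpa using this
  have := norm_le_zero_iff.mp h0
  linarith [sub_eq_zero.mp this]
end

section
/- Let γ : (0,∞) → ℝ³ be the logarithmic spiral γ(s) = (s/√2)·(cos(log s), 0, sin(log s)), with unit tangent T(s) = γ'(s) and unit principal normal N(s) = γ''(s)/‖γ''(s)‖. Then ⟨γ(s)/‖γ(s)‖, T(s)⟩ = 1/√2 and ⟨γ(s)/‖γ(s)‖, N(s)⟩ = -1/√2 for all s > 0. -/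
/-!
Write the spiral as `γ s = s • c (log s)` with `c θ = cos θ • a + sin θ • b`, where `a ⊥ b` and
`‖a‖ = ‖b‖`. Differentiating `c` turns the pair `(a, b)` into `(b, -a)`, so `γ' s` and `s • γ'' s`
are again such combinations, with coefficient pairs `(a + b, b - a)` and `(b - a, -(a + b))`.
The inner product of two combinations with coefficient pairs `(a, b)`, `(p, q)` is independent of
`θ` as soon as `⟪a, p⟫ = ⟪b, q⟫` and `⟪a, q⟫ = -⟪b, p⟫`; this gives `⟪γ/‖γ‖, γ'⟫ = ‖a‖` and
`⟪γ/‖γ‖, N⟫ = -‖a‖² / (‖a‖ · √2 ‖a‖) = -1/√2`.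
-/

open Real RealInnerProductSpace

section NormedSpace

variable {E : Type*} [NormedAddCommGroup E] [NormedSpace ℝ E]

noncomputable def trigComb (a b : E) (θ : ℝ) : E := cos θ • a + sin θ • b

noncomputable def logSpiral (a b : E) (t : ℝ) : E := t • trigComb a b (log t)

theorem trigComb_add_trigComb (a b c d : E) (θ : ℝ) :
    trigComb a b θ + trigComb c d θ = trigComb (a + c) (b + d) θ := by
  simp only [trigComb]
  module

theorem hasDerivAt_trigComb (a b : E) (θ : ℝ) :
    HasDerivAt (trigComb a b) (trigComb b (-a) θ) θ := by
  refine (((hasDerivAt_cos θ).smul_const a).add ((hasDerivAt_sin θ).smul_const b)).congr_deriv ?_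
  simp only [trigComb]
  module

theorem hasDerivAt_trigComb_log (a b : E) {s : ℝ} (hs : s ≠ 0) :
    HasDerivAt (fun t => trigComb a b (log t)) (s⁻¹ • trigComb b (-a) (log s)) s :=
  (hasDerivAt_trigComb a b (log s)).scomp s (hasDerivAt_log hs)

theorem hasDerivAt_logSpiral (a b : E) {s : ℝ} (hs : s ≠ 0) :
    HasDerivAt (logSpiral a b) (trigComb (a + b) (b - a) (log s)) s := by
  have h := (hasDerivAt_id' s).smul (hasDerivAt_trigComb_log a b hs)
  rwa [smul_smul, mul_inv_cancel₀ hs, one_smul, one_smul, add_comm, trigComb_add_trigComb,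
    ← sub_eq_add_neg] at h

theorem deriv_logSpiral (a b : E) {s : ℝ} (hs : s ≠ 0) :
    deriv (logSpiral a b) s = trigComb (a + b) (b - a) (log s) :=
  (hasDerivAt_logSpiral a b hs).deriv

theorem deriv_deriv_logSpiral (a b : E) {s : ℝ} (hs : s ≠ 0) :
    deriv (deriv (logSpiral a b)) s = s⁻¹ • trigComb (b - a) (-(a + b)) (log s) := by
  have h : deriv (logSpiral a b) =ᶠ[nhds s] fun t => trigComb (a + b) (b - a) (log t) := by
    filter_upwards [isOpen_ne.mem_nhds hs] with t ht using deriv_logSpiral a b ht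
  rw [h.deriv_eq]
  exact (hasDerivAt_trigComb_log _ _ hs).deriv

theorem inv_norm_smul_smul_of_pos {r : ℝ} (hr : 0 < r) (x : E) :
    ‖r • x‖⁻¹ • (r • x) = ‖x‖⁻¹ • x := by
  rw [norm_smul, norm_of_nonneg hr.le, smul_smul, mul_inv_rev, mul_assoc,
    inv_mul_cancel₀ hr.ne', mul_one]

end NormedSpace

section InnerProductSpace

variable {E : Type*} [NormedAddCommGroup E] [InnerProductSpace ℝ E] {a b : E}

theorem inner_trigComb_trigComb {p q : E} {k : ℝ} (hap : ⟪a, p⟫ = k) (hbq : ⟪b, q⟫ = k)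
    (hcross : ⟪a, q⟫ = -⟪b, p⟫) (θ : ℝ) : ⟪trigComb a b θ, trigComb p q θ⟫ = k := by
  simp only [trigComb, inner_add_left, inner_add_right, real_inner_smul_left,
    real_inner_smul_right, hap, hbq, hcross, real_inner_comm p b]
  linear_combination k * sin_sq_add_cos_sq θ

theorem norm_trigComb (hab : ⟪a, b⟫ = 0) (hba : ‖b‖ = ‖a‖) (θ : ℝ) :
    ‖trigComb a b θ‖ = ‖a‖ := by
  have h : ⟪trigComb a b θ, trigComb a b θ⟫ = ‖a‖ ^ 2 :=
    inner_trigComb_trigComb (real_inner_self_eq_norm_sq a)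
      (by rw [real_inner_self_eq_norm_sq, hba]) (by rw [hab, real_inner_comm, hab, neg_zero]) θ
  rw [real_inner_self_eq_norm_sq] at h
  exact (sq_eq_sq₀ (norm_nonneg _) (norm_nonneg _)).mp h

theorem norm_add_eq_sqrt_two_mul_of_orthogonal (hab : ⟪a, b⟫ = 0) (hba : ‖b‖ = ‖a‖) :
    ‖a + b‖ = √2 * ‖a‖ := by
  rw [(norm_add_eq_sqrt_iff_real_inner_eq_zero).2 hab, hba, ← two_mul, sqrt_mul zero_le_two,
    sqrt_mul_self (norm_nonneg a)]

theorem inner_unit_logSpiral_deriv (hab : ⟪a, b⟫ = 0) (hba : ‖b‖ = ‖a‖) {s : ℝ} (hs : 0 < s) :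
    ⟪‖logSpiral a b s‖⁻¹ • logSpiral a b s, deriv (logSpiral a b) s⟫ = ‖a‖ := by
  have hba' : ⟪b, a⟫ = 0 := by rw [real_inner_comm, hab]
  rw [logSpiral, inv_norm_smul_smul_of_pos hs, deriv_logSpiral a b hs.ne', real_inner_smul_left,
    norm_trigComb hab hba, inner_trigComb_trigComb (k := ‖a‖ ^ 2), sq, inv_mul_eq_div,
    mul_self_div_self] <;>
  simp [inner_add_right, inner_sub_right, hab, hba', hba]

theorem inner_unit_logSpiral_unit_deriv_deriv (hab : ⟪a, b⟫ = 0) (hba : ‖b‖ = ‖a‖) (ha : a ≠ 0)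
    {s : ℝ} (hs : 0 < s) :
    ⟪‖logSpiral a b s‖⁻¹ • logSpiral a b s,
      ‖deriv (deriv (logSpiral a b)) s‖⁻¹ • deriv (deriv (logSpiral a b)) s⟫ = -(1 / √2) := by
  have hba' : ⟪b, a⟫ = 0 := by rw [real_inner_comm, hab]
  have hsub : ‖b - a‖ = √2 * ‖a‖ := by
    rw [sub_eq_add_neg, norm_add_eq_sqrt_two_mul_of_orthogonal (by simp [hba']) (by simp [hba]),
      hba]
  have hadd : ‖-(a + b)‖ = ‖b - a‖ := by
    rw [norm_neg, hsub, norm_add_eq_sqrt_two_mul_of_orthogonal hab hba]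
  rw [logSpiral, deriv_deriv_logSpiral a b hs.ne', inv_norm_smul_smul_of_pos hs,
    inv_norm_smul_smul_of_pos (inv_pos.2 hs), real_inner_smul_left, real_inner_smul_right,
    norm_trigComb hab hba, norm_trigComb _ hadd, inner_trigComb_trigComb (k := -‖a‖ ^ 2), hsub]
  · have := norm_ne_zero_iff.2 ha
    field_simp
  all_goals simp [inner_add_right, inner_sub_left, inner_sub_right, hab, hba', hba]

end InnerProductSpace

/-- Along the logarithmic spiral, the radial unit vector field has constant
tangential component `1/√2` and makes the constant product `-1/√2` with the
unit principal normal. -/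
theorem log_spiral_slant_helix (γ : ℝ → EuclideanSpace ℝ (Fin 3))
    (hγ0 : ∀ s : ℝ, γ s 0 = s / Real.sqrt 2 * Real.cos (Real.log s))
    (hγ1 : ∀ s : ℝ, γ s 1 = 0)
    (hγ2 : ∀ s : ℝ, γ s 2 = s / Real.sqrt 2 * Real.sin (Real.log s)) :
    ∀ s : ℝ, 0 < s →
      (inner ℝ ((‖γ s‖)⁻¹ • γ s) (deriv γ s) : ℝ) = 1 / Real.sqrt 2 ∧
      (inner ℝ ((‖γ s‖)⁻¹ • γ s)
        ((‖deriv (deriv γ) s‖)⁻¹ • deriv (deriv γ) s) : ℝ) = -(1 / Real.sqrt 2) := by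
  set a : EuclideanSpace ℝ (Fin 3) := (√2)⁻¹ • EuclideanSpace.single 0 1
  set b : EuclideanSpace ℝ (Fin 3) := (√2)⁻¹ • EuclideanSpace.single 2 1
  have hγ : γ = logSpiral a b := by
    funext t
    ext i
    fin_cases i <;> simp [logSpiral, trigComb, a, b, hγ0, hγ1, hγ2] <;> ring
  have hab : ⟪a, b⟫ = 0 := by
    simp [a, b, real_inner_smul_left, real_inner_smul_right, EuclideanSpace.inner_single_left]
  have hba : ‖b‖ = ‖a‖ := by simp [a, b, norm_smul]
  have ha : ‖a‖ = 1 / √2 := by simp [a, norm_smul]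
  intro s hs
  subst hγ
  exact ⟨ha ▸ inner_unit_logSpiral_deriv hab hba hs,
    inner_unit_logSpiral_unit_deriv_deriv hab hba (norm_ne_zero_iff.1 (by simp [ha])) hs⟩
end

section
/- Let γ : (0,∞) → ℝ³ be the conical loxodrome γ(s) = (s/4)·(cos m(s), √3, sin m(s)) with m(s) = 2√3·log(s/4). Then the curvature of γ is κ(s) = ‖γ''(s)‖ = √39/(2s) for all s > 0. -/
/-!
Write the curve as `γ(s) = r s (cos θ, h, sin θ)` with `θ = k log (s / c)`.
Since `s θ'(s) = k`, the velocity `γ'(s) = r (cos θ - k sin θ, h, sin θ + k cos θ)`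
depends on `s` only through `θ`, so `γ''(s) = θ'(s) · dγ'/dθ = (k / s) · dγ'/dθ`,
and `dγ'/dθ` has constant length `|r| √(1 + k²)`.
For `r = 1/4`, `k = 2√3` this gives `κ(s) = (√3 / 2) · √13 / s = √39 / (2s)`.
-/

open Real

theorem HasDerivAt.euclideanSpace_vec3 {f g h : ℝ → ℝ} {f' g' h' x : ℝ}
    (hf : HasDerivAt f f' x) (hg : HasDerivAt g g' x) (hh : HasDerivAt h h' x) :
    HasDerivAt (fun t => !₂[f t, g t, h t]) !₂[f', g', h'] x :=
  (PiLp.hasFDerivAt_toLp 2 ![f x, g x, h x]).comp_hasDerivAt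
      (f := fun t => ![f t, g t, h t]) x <|
    hf.finCons <| hg.finCons <| hh.finCons <|
      (hasDerivAt_const x ![]).congr_deriv (Subsingleton.elim _ _)

theorem norm_euclideanSpace_vec3 (a b c : ℝ) : ‖!₂[a, b, c]‖ = √(a ^ 2 + b ^ 2 + c ^ 2) := by
  simp [EuclideanSpace.norm_eq, Fin.sum_univ_three]

theorem hasDerivAt_mul_log_div (k : ℝ) {c s : ℝ} (hc : c ≠ 0) (hs : s ≠ 0) :
    HasDerivAt (fun t => k * log (t / c)) (k / s) s :=
  ((((hasDerivAt_id' s).div_const c).log (div_ne_zero hs hc)).const_mul k).congr_deriv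
    (by field_simp)

noncomputable def conicalLoxodrome (r h k c s : ℝ) : EuclideanSpace ℝ (Fin 3) :=
  !₂[r * s * cos (k * log (s / c)), r * s * h, r * s * sin (k * log (s / c))]

noncomputable def conicalLoxodromeVelocity (r h k θ : ℝ) : EuclideanSpace ℝ (Fin 3) :=
  !₂[r * (cos θ - k * sin θ), r * h, r * (sin θ + k * cos θ)]

section

variable (r h k : ℝ) {c s : ℝ}

theorem hasDerivAt_conicalLoxodromeVelocity (θ : ℝ) :
    HasDerivAt (conicalLoxodromeVelocity r h k)
      !₂[-r * (sin θ + k * cos θ), 0, r * (cos θ - k * sin θ)] θ := by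
  refine HasDerivAt.euclideanSpace_vec3 ?_ (hasDerivAt_const θ _) ?_
  · exact (((hasDerivAt_cos θ).sub ((hasDerivAt_sin θ).const_mul k)).const_mul r).congr_deriv
      (by ring)
  · exact (((hasDerivAt_sin θ).add ((hasDerivAt_cos θ).const_mul k)).const_mul r).congr_deriv
      (by ring)

theorem norm_deriv_conicalLoxodromeVelocity (θ : ℝ) :
    ‖deriv (conicalLoxodromeVelocity r h k) θ‖ = |r| * √(1 + k ^ 2) := by
  rw [(hasDerivAt_conicalLoxodromeVelocity r h k θ).deriv, norm_euclideanSpace_vec3,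
    ← sqrt_sq_eq_abs, ← sqrt_mul (sq_nonneg r)]
  congr 1
  linear_combination r ^ 2 * (1 + k ^ 2) * sin_sq_add_cos_sq θ

theorem hasDerivAt_conicalLoxodrome (hc : c ≠ 0) (hs : s ≠ 0) :
    HasDerivAt (conicalLoxodrome r h k c) (conicalLoxodromeVelocity r h k (k * log (s / c))) s := by
  have hθ := hasDerivAt_mul_log_div k hc hs
  have hrs : HasDerivAt (fun t => r * t) r s := by simpa using (hasDerivAt_id s).const_mul r
  refine HasDerivAt.euclideanSpace_vec3 ?_ (hrs.mul_const h) ?_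
  · exact (hrs.mul hθ.cos).congr_deriv (by field_simp; ring)
  · exact (hrs.mul hθ.sin).congr_deriv (by field_simp)

theorem deriv_deriv_conicalLoxodrome (hc : c ≠ 0) (hs : s ≠ 0) :
    deriv (deriv (conicalLoxodrome r h k c)) s =
      (k / s) • deriv (conicalLoxodromeVelocity r h k) (k * log (s / c)) := by
  have hvel : deriv (conicalLoxodrome r h k c) =ᶠ[nhds s]
      fun t => conicalLoxodromeVelocity r h k (k * log (t / c)) := by
    filter_upwards [isOpen_ne.mem_nhds hs] with t ht
    exact (hasDerivAt_conicalLoxodrome r h k hc ht).deriv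
  rw [hvel.deriv_eq, (hasDerivAt_conicalLoxodromeVelocity r h k _).deriv]
  exact ((hasDerivAt_conicalLoxodromeVelocity r h k _).scomp s
    (hasDerivAt_mul_log_div k hc hs)).deriv

theorem norm_deriv_deriv_conicalLoxodrome (hc : c ≠ 0) (hs : s ≠ 0) :
    ‖deriv (deriv (conicalLoxodrome r h k c)) s‖ = |r * k| * √(1 + k ^ 2) / |s| := by
  rw [deriv_deriv_conicalLoxodrome r h k hc hs, norm_smul, norm_deriv_conicalLoxodromeVelocity,
    norm_div, Real.norm_eq_abs, Real.norm_eq_abs, abs_mul]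
  ring

end

/-- The conical loxodrome has curvature `κ(s) = √39/(2s)` for `s > 0`. -/
theorem loxodrome_curvature (γ : ℝ → EuclideanSpace ℝ (Fin 3))
    (hγ0 : ∀ s : ℝ, γ s 0 = s / 4 * Real.cos (2 * Real.sqrt 3 * Real.log (s / 4)))
    (hγ1 : ∀ s : ℝ, γ s 1 = s / 4 * Real.sqrt 3)
    (hγ2 : ∀ s : ℝ, γ s 2 = s / 4 * Real.sin (2 * Real.sqrt 3 * Real.log (s / 4))) :
    ∀ s : ℝ, 0 < s → ‖deriv (deriv γ) s‖ = Real.sqrt 39 / (2 * s) := by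
  intro s hs
  have hγ : γ = conicalLoxodrome (1 / 4) √3 (2 * √3) 4 := by
    funext t
    ext i
    fin_cases i <;> simp [conicalLoxodrome, hγ0 t, hγ1 t, hγ2 t, div_eq_inv_mul]
  have h13 : √(1 + (2 * √3) ^ 2) = √13 := by norm_num [mul_pow]
  have h39 : √39 = √3 * √13 := by rw [← sqrt_mul (by norm_num)]; norm_num
  rw [hγ, norm_deriv_deriv_conicalLoxodrome _ _ _ four_ne_zero hs.ne', abs_of_pos hs, h13, h39,
    abs_of_pos (by positivity)]
  ring
end

section
/- Let γ : (0,∞) → ℝ³ be the conical loxodrome γ(s) = (s/4)·(cos m(s), √3, sin m(s)) with m(s) = 2√3·log(s/4), with unit principal normal N(s) = γ''(s)/‖γ''(s)‖. Then ⟨γ(s)/‖γ(s)‖, N(s)⟩ = -√3/√13 for all s > 0. -/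
/-!
Write `θ(s) = k log (s / b)`, so that `γ(s) = a s (cos θ, h, sin θ)`. Since `s θ' = k`,
differentiating twice gives `γ'' = (a k / s) (-(sin θ + k cos θ), 0, cos θ - k sin θ)`. Hence
`⟪γ, γ''⟫ = -(a k)²`, `‖γ‖ = |a s| √(1 + h²)` and `‖γ''‖ = |a k / s| √(1 + k²)`: the powers of `s`
cancel and the cosine of the angle between `γ` and `γ''` is the constant
`-|k| / (√(1 + h²) √(1 + k²))`, which is `-√3/√13` for `a = 1/4`, `h = √3`, `k = 2√3`, `b = 4`.
-/

open Real

theorem hasDerivAt_piLp_of_forall {𝕜 ι : Type*} [NontriviallyNormedField 𝕜] [Fintype ι]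
    {E : ι → Type*} [∀ i, NormedAddCommGroup (E i)] [∀ i, NormedSpace 𝕜 (E i)] {p : ENNReal}
    [Fact (1 ≤ p)] {f : 𝕜 → PiLp p E} {f' : PiLp p E} {x : 𝕜}
    (h : ∀ i, HasDerivAt (fun t => f t i) (f' i) x) : HasDerivAt f f' x := by
  have := (PiLp.hasFDerivAt_toLp (𝕜 := 𝕜) p _).comp_hasDerivAt x (hasDerivAt_pi.2 h)
  exact this

namespace ConicalLoxodrome

variable (a h k b : ℝ)

noncomputable def angle (s : ℝ) : ℝ := k * log (s / b)

noncomputable def curve (s : ℝ) : EuclideanSpace ℝ (Fin 3) :=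
  !₂[a * s * cos (angle k b s), a * s * h, a * s * sin (angle k b s)]

noncomputable def velocity (s : ℝ) : EuclideanSpace ℝ (Fin 3) :=
  !₂[a * (cos (angle k b s) - k * sin (angle k b s)), a * h,
    a * (sin (angle k b s) + k * cos (angle k b s))]

noncomputable def acceleration (s : ℝ) : EuclideanSpace ℝ (Fin 3) :=
  !₂[-(a * k / s) * (sin (angle k b s) + k * cos (angle k b s)), 0,
    a * k / s * (cos (angle k b s) - k * sin (angle k b s))]

variable {a h k b} {s : ℝ}

theorem hasDerivAt_angle (hb : b ≠ 0) (hs : s ≠ 0) : HasDerivAt (angle k b) (k / s) s := by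
  refine ((((hasDerivAt_id' s).div_const b).log (div_ne_zero hs hb)).const_mul k).congr_deriv ?_
  field_simp

theorem hasDerivAt_curve (hb : b ≠ 0) (hs : s ≠ 0) :
    HasDerivAt (curve a h k b) (velocity a h k b s) s := by
  have hθ := hasDerivAt_angle (k := k) hb hs
  have hlin := (hasDerivAt_id' s).const_mul a
  refine hasDerivAt_piLp_of_forall fun i => ?_
  fin_cases i <;> simp only [curve, velocity, Fin.zero_eta, Fin.mk_one, Fin.reduceFinMk,
    Fin.isValue, Matrix.cons_val_zero, Matrix.cons_val_one, Matrix.cons_val]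
  · exact (hlin.mul hθ.cos).congr_deriv (by field_simp; ring)
  · exact (hlin.mul_const h).congr_deriv (by ring)
  · exact (hlin.mul hθ.sin).congr_deriv (by field_simp)

theorem hasDerivAt_velocity (hb : b ≠ 0) (hs : s ≠ 0) :
    HasDerivAt (velocity a h k b) (acceleration a k b s) s := by
  have hθ := hasDerivAt_angle (k := k) hb hs
  refine hasDerivAt_piLp_of_forall fun i => ?_
  fin_cases i <;> simp only [velocity, acceleration, Fin.zero_eta, Fin.mk_one, Fin.reduceFinMk,
    Fin.isValue, Matrix.cons_val_zero, Matrix.cons_val_one, Matrix.cons_val]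
  · exact ((hθ.cos.sub (hθ.sin.const_mul k)).const_mul a).congr_deriv (by field_simp; ring)
  · exact hasDerivAt_const s _
  · exact ((hθ.sin.add (hθ.cos.const_mul k)).const_mul a).congr_deriv (by field_simp; ring)

theorem deriv_deriv_curve (hb : b ≠ 0) (hs : s ≠ 0) :
    deriv (deriv (curve a h k b)) s = acceleration a k b s := by
  have hderiv : deriv (curve a h k b) =ᶠ[nhds s] velocity a h k b :=
    Filter.eventuallyEq_of_mem (isOpen_ne.mem_nhds hs) fun t ht => (hasDerivAt_curve hb ht).deriv
  rw [hderiv.deriv_eq, (hasDerivAt_velocity hb hs).deriv]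

theorem norm_curve : ‖curve a h k b s‖ = |a * s| * √(1 + h ^ 2) := by
  rw [EuclideanSpace.norm_eq, ← sqrt_sq_eq_abs, ← sqrt_mul (sq_nonneg _)]
  congr 1
  simp only [curve, norm_eq_abs, sq_abs, Fin.sum_univ_three, Fin.isValue,
    Matrix.cons_val_zero, Matrix.cons_val_one, Matrix.cons_val]
  linear_combination (a * s) ^ 2 * sin_sq_add_cos_sq (angle k b s)

theorem norm_acceleration : ‖acceleration a k b s‖ = |a * k / s| * √(1 + k ^ 2) := by
  rw [EuclideanSpace.norm_eq, ← sqrt_sq_eq_abs, ← sqrt_mul (sq_nonneg _)]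
  congr 1
  simp only [acceleration, norm_eq_abs, sq_abs, Fin.sum_univ_three, Fin.isValue,
    Matrix.cons_val_zero, Matrix.cons_val_one, Matrix.cons_val]
  linear_combination (a * k / s) ^ 2 * (1 + k ^ 2) * sin_sq_add_cos_sq (angle k b s)

theorem inner_curve_acceleration (hs : s ≠ 0) :
    inner ℝ (curve a h k b s) (acceleration a k b s) = -(a * k) ^ 2 := by
  simp only [curve, acceleration, PiLp.inner_apply, RCLike.inner_apply, conj_trivial,
    Fin.sum_univ_three, Fin.isValue,
    Matrix.cons_val_zero, Matrix.cons_val_one, Matrix.cons_val]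
  field_simp
  linear_combination -(a * k) ^ 2 * sin_sq_add_cos_sq (angle k b s)

theorem inner_normalize_curve_normalize_deriv_deriv (ha : a ≠ 0) (hb : b ≠ 0) (hs : s ≠ 0) :
    inner ℝ (‖curve a h k b s‖⁻¹ • curve a h k b s)
      (‖deriv (deriv (curve a h k b)) s‖⁻¹ • deriv (deriv (curve a h k b)) s)
      = -|k| / (√(1 + h ^ 2) * √(1 + k ^ 2)) := by
  rw [deriv_deriv_curve hb hs, real_inner_smul_left, real_inner_smul_right,
    inner_curve_acceleration hs, norm_curve, norm_acceleration]
  rcases eq_or_ne k 0 with rfl | hk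
  · simp
  have : 0 < √(1 + h ^ 2) := by positivity
  have : 0 < √(1 + k ^ 2) := by positivity
  simp only [abs_mul, abs_div]
  field_simp
  simp only [sq_abs]
  ring

end ConicalLoxodrome

open ConicalLoxodrome in
/-- Along the conical loxodrome the radial unit vector field makes the constant
product `-√3/√13` with the unit principal normal. -/
theorem loxodrome_normal_component (γ : ℝ → EuclideanSpace ℝ (Fin 3))
    (hγ0 : ∀ s : ℝ, γ s 0 = s / 4 * Real.cos (2 * Real.sqrt 3 * Real.log (s / 4)))
    (hγ1 : ∀ s : ℝ, γ s 1 = s / 4 * Real.sqrt 3)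
    (hγ2 : ∀ s : ℝ, γ s 2 = s / 4 * Real.sin (2 * Real.sqrt 3 * Real.log (s / 4))) :
    ∀ s : ℝ, 0 < s →
      (inner ℝ ((‖γ s‖)⁻¹ • γ s)
        ((‖deriv (deriv γ) s‖)⁻¹ • deriv (deriv γ) s) : ℝ)
        = -(Real.sqrt 3 / Real.sqrt 13) := by
  intro s hs
  obtain rfl : γ = curve (1 / 4) √3 (2 * √3) 4 := by
    funext t
    ext i
    fin_cases i <;> simp [curve, angle, hγ0, hγ1, hγ2, div_eq_inv_mul]
  rw [inner_normalize_curve_normalize_deriv_deriv (by norm_num) (by norm_num) hs.ne',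
    mul_pow, sq_sqrt zero_le_three, abs_of_pos (by positivity)]
  norm_num
  field_simp
end

section
/- Let θ be a constant and κ, τ, ρ, f₃ : I → ℝ differentiable with κ > 0, f₃ nowhere zero, φ := τ/κ, satisfying f₃' = -θτ and φ' = (θκ(1+φ²) + ρ)/f₃ with φ' nowhere zero on I. Then θ·(κ(1+φ²)/φ')' + (ρ/φ')' + θκφ = 0 on I. -/
open Filter Topology

lemma mul_div_add_div_eq_of_eq_div {θ k r f d : ℝ} (hd : d = (θ * k + r) / f) (hd0 : d ≠ 0) :
    θ * (k / d) + r / d = f := by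
  have hnum : θ * k + r ≠ 0 := (div_ne_zero_iff.mp (hd ▸ hd0)).1
  calc θ * (k / d) + r / d = (θ * k + r) / d := by ring
    _ = f := by rw [hd, div_div_cancel₀ hnum]

lemma const_mul_deriv_add_deriv_eq_of_eventuallyEq {θ f' s : ℝ} {u v f : ℝ → ℝ}
    (hu : DifferentiableAt ℝ u s) (hv : DifferentiableAt ℝ v s) (hf : HasDerivAt f f' s)
    (h : (fun t => θ * u t + v t) =ᶠ[𝓝 s] f) :
    θ * deriv u s + deriv v s = f' :=
  (((hu.hasDerivAt.const_mul θ).add hv.hasDerivAt).congr_of_eventuallyEq h.symm).unique hf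

theorem concircular_curve_ode_general (a b θ : ℝ) (κ τ ρ f₃ φ : ℝ → ℝ)
    (hκpos : ∀ s ∈ Set.Ioo a b, 0 < κ s)
    (hφ : ∀ s ∈ Set.Ioo a b, φ s = τ s / κ s)
    (hκd : ∀ s ∈ Set.Ioo a b, DifferentiableAt ℝ κ s)
    (hρd : ∀ s ∈ Set.Ioo a b, DifferentiableAt ℝ ρ s)
    (hφd : ∀ s ∈ Set.Ioo a b, DifferentiableAt ℝ φ s)
    (hf₃' : ∀ s ∈ Set.Ioo a b, HasDerivAt f₃ (-(θ * τ s)) s)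
    (hφ' : ∀ s ∈ Set.Ioo a b,
      deriv φ s = (θ * κ s * (1 + φ s ^ 2) + ρ s) / f₃ s)
    (hφ'ne : ∀ s ∈ Set.Ioo a b, deriv φ s ≠ 0) :
    ∀ s ∈ Set.Ioo a b,
      θ * deriv (fun t => κ t * (1 + φ t ^ 2) / deriv φ t) s
        + deriv (fun t => ρ t / deriv φ t) s + θ * κ s * φ s = 0 := by
  intro s hs
  have hnhds : Set.Ioo a b ∈ 𝓝 s := isOpen_Ioo.mem_nhds hs
  have hκ := hκd s hs
  have hρ := hρd s hs
  have hφs := hφd s hs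
  have hf₃ : f₃ s ≠ 0 := (div_ne_zero_iff.mp (hφ' s hs ▸ hφ'ne s hs)).2
  have hf₃d := (hf₃' s hs).differentiableAt
  have hφ'd : DifferentiableAt ℝ (deriv φ) s :=
    (show DifferentiableAt ℝ (fun t => (θ * κ t * (1 + φ t ^ 2) + ρ t) / f₃ t) s by
      fun_prop (disch := exact hf₃)).congr_of_eventuallyEq
      (Set.EqOn.eventuallyEq_of_mem hφ' hnhds)
  -- `θ κ(1+φ²)/φ' + ρ/φ'` is `f₃` itself, so its derivative is `-θτ = -θκφ`.
  have hsum := const_mul_deriv_add_deriv_eq_of_eventuallyEq (θ := θ)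
    (u := fun t => κ t * (1 + φ t ^ 2) / deriv φ t) (v := fun t => ρ t / deriv φ t)
    (by fun_prop (disch := exact hφ'ne s hs)) (by fun_prop (disch := exact hφ'ne s hs))
    (hf₃' s hs) (Set.EqOn.eventuallyEq_of_mem (fun t ht =>
      mul_div_add_div_eq_of_eq_div (by rw [hφ' t ht, mul_assoc]) (hφ'ne t ht)) hnhds)
  have hτ : κ s * φ s = τ s := by rw [hφ s hs, mul_div_cancel₀ _ (hκpos s hs).ne']
  linear_combination hsum + θ * hτ

/-- Theorem 5.2: a concircular curve with `T(φ) ≠ 0` satisfies the ODE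
`θ (κ(1+φ²)/φ')' + (ρ/φ')' + θκφ = 0`, where `φ = τ/κ`. -/
theorem concircular_curve_ode (a b θ : ℝ) (κ τ ρ f₃ φ : ℝ → ℝ)
    (hκpos : ∀ s ∈ Set.Ioo a b, 0 < κ s)
    (hf₃ : ∀ s ∈ Set.Ioo a b, f₃ s ≠ 0)
    (hφ : ∀ s ∈ Set.Ioo a b, φ s = τ s / κ s)
    (hκd : ∀ s ∈ Set.Ioo a b, DifferentiableAt ℝ κ s)
    (hρd : ∀ s ∈ Set.Ioo a b, DifferentiableAt ℝ ρ s)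
    (hτd : ∀ s ∈ Set.Ioo a b, DifferentiableAt ℝ τ s)
    (hφd : ∀ s ∈ Set.Ioo a b, DifferentiableAt ℝ φ s)
    (hf₃' : ∀ s ∈ Set.Ioo a b, HasDerivAt f₃ (-(θ * τ s)) s)
    (hφ' : ∀ s ∈ Set.Ioo a b,
      deriv φ s = (θ * κ s * (1 + φ s ^ 2) + ρ s) / f₃ s)
    (hφ'ne : ∀ s ∈ Set.Ioo a b, deriv φ s ≠ 0) :
    ∀ s ∈ Set.Ioo a b,
      θ * deriv (fun t => κ t * (1 + φ t ^ 2) / deriv φ t) s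
        + deriv (fun t => ρ t / deriv φ t) s + θ * κ s * φ s = 0 :=
  concircular_curve_ode_general a b θ κ τ ρ f₃ φ hκpos hφ hκd hρd hφd hf₃' hφ' hφ'ne
end
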